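/- Let h : ℝ → ℝ be continuous and x : ℝ → ℝ differentiable with deriv x t = x t * h t for all t. If x 0 > 0, then x t > 0 for all t ≥ 0. -/

import Mathlib

/-!
Along a solution of `x' = h(t) x`, the product `exp (-H t) • x t` with `H` an antiderivative of
`h` has derivative zero, hence is constant. With `H t = ∫ s in t₀..t, h s` this gives the closed
form `x t = exp (∫ s in t₀..t, h s) • x t₀`, so a solution starting positive is positive forever.
-/

open Real

section LinearODE

variable {E : Type*} [NormedAddCommGroup E] [NormedSpace ℝ E] {h H : ℝ → ℝ} {x : ℝ → E}

theorem exp_neg_smul_eq_of_hasDerivAt_smul (hH : ∀ t, HasDerivAt H (h t) t)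
    (hx : ∀ t, HasDerivAt x (h t • x t) t) (t t₀ : ℝ) :
    exp (-H t) • x t = exp (-H t₀) • x t₀ := by
  have hderiv : ∀ s, HasDerivAt (fun s => exp (-H s) • x s) 0 s := fun s => by
    have := ((hH s).neg.exp).smul (hx s)
    rwa [smul_smul, ← add_smul, mul_neg, add_neg_cancel, zero_smul] at this
  exact is_const_of_deriv_eq_zero (fun s => (hderiv s).differentiableAt)
    (fun s => (hderiv s).deriv) t t₀

theorem eq_exp_integral_smul_of_hasDerivAt_smul (hh : Continuous h)
    (hx : ∀ t, HasDerivAt x (h t • x t) t) (t₀ t : ℝ) :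
    x t = exp (∫ s in t₀..t, h s) • x t₀ := by
  have hconst := exp_neg_smul_eq_of_hasDerivAt_smul
    (fun t => (hh.integral_hasStrictDerivAt t₀ t).hasDerivAt) hx t t₀
  rw [intervalIntegral.integral_same, neg_zero, exp_zero, one_smul] at hconst
  rw [← hconst, smul_smul, ← exp_add, add_neg_cancel, exp_zero, one_smul]

end LinearODE

theorem stmt_10 (h x : ℝ → ℝ) (hh : Continuous h)
    (hx : Differentiable ℝ x)
    (hderiv : ∀ t, deriv x t = x t * h t)
    (h0 : x 0 > 0) :
    ∀ t ≥ (0:ℝ), x t > 0 := by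
  have hx' : ∀ t, HasDerivAt x (h t • x t) t := fun t => by
    rw [smul_eq_mul, mul_comm, ← hderiv t]
    exact (hx t).hasDerivAt
  intro t _
  rw [eq_exp_integral_smul_of_hasDerivAt_smul hh hx' 0 t, smul_eq_mul]
  positivity
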